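/- arXiv:2209.11059 — 3 statements merged into one kernel-verified Lean document; each statement's English description precedes it below -/
import Mathlib

section
/- For a ∈ [½·log 2, ∞), define R(a) = log((cosh a + 1)/(cosh a − 1)) and A(a) = log(cosh a) − log(cosh a − 1). Then 0 < A(a) < R(a), the ratio A(a)/R(a) is monotone decreasing in a, and R(a) ∈ (0, log(17 + 12√2)]. -/
/-!
Put `c = cosh a > 1`. Then `A / R = (log c - log (c - 1)) / (log (c + 1) - log (c - 1))`, and the
sign of its derivative in `c` is that of `2 c log c - (c - 1) log (c - 1) - (c + 1) log (c + 1)`,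
which is nonpositive by midpoint convexity of `x ↦ x log x`; since `cosh` is increasing on
`[0, ∞)`, the ratio decreases in `a`. Likewise `R = log (1 + 2 / (c - 1))` decreases in `a`, so its
maximum on the interval is at `a = log 2 / 2`, where `c = 3 / (2√2)`.
-/

noncomputable def Rfun (a : ℝ) : ℝ := Real.log ((Real.cosh a + 1) / (Real.cosh a - 1))

noncomputable def Afun (a : ℝ) : ℝ := Real.log (Real.cosh a) - Real.log (Real.cosh a - 1)

open Real Set

lemma two_mul_mul_log_le {c : ℝ} (hc : 1 ≤ c) :
    2 * (c * log c) ≤ (c - 1) * log (c - 1) + (c + 1) * log (c + 1) := by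
  have h := convexOn_mul_log.2 (show c - 1 ∈ Ici (0 : ℝ) from sub_nonneg.2 hc)
    (show c + 1 ∈ Ici (0 : ℝ) by simp only [mem_Ici]; linarith)
    (by norm_num : (0 : ℝ) ≤ 1 / 2) (by norm_num : (0 : ℝ) ≤ 1 / 2) (by norm_num)
  simp only [smul_eq_mul] at h
  rw [show 1 / 2 * (c - 1) + 1 / 2 * (c + 1) = c by ring] at h
  linarith

noncomputable def logRatio (c : ℝ) : ℝ :=
  (log c - log (c - 1)) / (log (c + 1) - log (c - 1))

lemma log_sub_log_sub_one_pos {c : ℝ} (hc : 1 < c) : 0 < log c - log (c - 1) :=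
  sub_pos.2 (log_lt_log (by linarith) (by linarith))

lemma log_sub_log_sub_one_lt_log_add_one_sub {c : ℝ} (hc : 1 < c) :
    log c - log (c - 1) < log (c + 1) - log (c - 1) :=
  sub_lt_sub_right (log_lt_log (by linarith) (by linarith)) _

lemma hasDerivAt_logRatio {c : ℝ} (hc : 1 < c) :
    HasDerivAt logRatio
      ((2 * c * (log c - log (c - 1)) - (c + 1) * (log (c + 1) - log (c - 1))) /
        (c * (c - 1) * (c + 1) * (log (c + 1) - log (c - 1)) ^ 2)) c := by
  have hc0 : c ≠ 0 := by linarith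
  have hc1 : c - 1 ≠ 0 := by linarith
  have hc2 : c + 1 ≠ 0 := by linarith
  have hlog_sub : HasDerivAt (fun x => log (x - 1)) (1 / (c - 1)) c := by
    simpa using ((hasDerivAt_id c).sub_const 1).log hc1
  have hnum : HasDerivAt (fun x => log x - log (x - 1)) (c⁻¹ - 1 / (c - 1)) c :=
    (hasDerivAt_log hc0).sub hlog_sub
  have hden : HasDerivAt (fun x => log (x + 1) - log (x - 1)) (1 / (c + 1) - 1 / (c - 1)) c :=
    (by simpa using ((hasDerivAt_id c).add_const 1).log hc2 : HasDerivAt _ _ _).sub hlog_sub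
  have hden_ne : log (c + 1) - log (c - 1) ≠ 0 :=
    (log_sub_log_sub_one_pos hc |>.trans (log_sub_log_sub_one_lt_log_add_one_sub hc)).ne'
  refine (hnum.div hden hden_ne).congr_deriv ?_
  field_simp
  ring

lemma antitoneOn_logRatio : AntitoneOn logRatio (Ioi 1) := by
  refine antitoneOn_of_deriv_nonpos (convex_Ioi 1) ?_ ?_ ?_
  · exact fun c hc => (hasDerivAt_logRatio hc).continuousAt.continuousWithinAt
  · rw [interior_Ioi]
    exact fun c hc => (hasDerivAt_logRatio hc).differentiableAt.differentiableWithinAt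
  · rw [interior_Ioi]
    intro c (hc : 1 < c)
    rw [(hasDerivAt_logRatio hc).deriv]
    refine div_nonpos_of_nonpos_of_nonneg ?_ ?_
    · linarith [two_mul_mul_log_le hc.le]
    · have hprod : 0 < c * (c - 1) * (c + 1) := by
        apply mul_pos (mul_pos _ _) _ <;> linarith
      positivity

lemma Rfun_eq_log_sub_log {a : ℝ} (ha : a ≠ 0) :
    Rfun a = log (cosh a + 1) - log (cosh a - 1) := by
  have hc := one_lt_cosh.2 ha
  exact log_div (by linarith) (by linarith)

lemma Afun_div_Rfun {a : ℝ} (ha : a ≠ 0) : Afun a / Rfun a = logRatio (cosh a) := by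
  rw [Rfun_eq_log_sub_log ha, Afun, logRatio]

lemma Afun_pos {a : ℝ} (ha : a ≠ 0) : 0 < Afun a :=
  log_sub_log_sub_one_pos (one_lt_cosh.2 ha)

lemma Afun_lt_Rfun {a : ℝ} (ha : a ≠ 0) : Afun a < Rfun a :=
  (Rfun_eq_log_sub_log ha).symm ▸ log_sub_log_sub_one_lt_log_add_one_sub (one_lt_cosh.2 ha)

lemma Rfun_pos {a : ℝ} (ha : a ≠ 0) : 0 < Rfun a :=
  (Afun_pos ha).trans (Afun_lt_Rfun ha)

lemma antitoneOn_Rfun : AntitoneOn Rfun (Ioi 0) := by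
  intro x (hx : 0 < x) y _ hxy
  have hcx : 1 < cosh x := one_lt_cosh.2 hx.ne'
  have hcxy : cosh x ≤ cosh y := cosh_le_cosh.2 (abs_le_abs_of_nonneg hx.le hxy)
  refine log_le_log (div_pos (by linarith) (by linarith)) ?_
  rw [div_le_div_iff₀ (by linarith) (by linarith)]
  linarith

lemma cosh_half_log_two : cosh (log 2 / 2) = 3 * √2 / 4 := by
  rw [cosh_eq, exp_neg, exp_half, exp_log two_pos]
  field_simp
  nlinarith [sq_sqrt (show (0 : ℝ) ≤ 2 by norm_num)]

lemma Rfun_half_log_two : Rfun (log 2 / 2) = log (17 + 12 * √2) := by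
  have h2 := sq_sqrt (show (0 : ℝ) ≤ 2 by norm_num)
  have hden : 3 * √2 / 4 - 1 ≠ 0 := by nlinarith [sqrt_nonneg 2]
  rw [Rfun, cosh_half_log_two]
  congr 1
  rw [div_eq_iff hden]
  nlinarith

lemma antitoneOn_Afun_div_Rfun : AntitoneOn (fun a => Afun a / Rfun a) (Ioi 0) := by
  intro x (hx : 0 < x) y (hy : 0 < y) hxy
  simp only [Afun_div_Rfun hx.ne', Afun_div_Rfun hy.ne']
  exact antitoneOn_logRatio (one_lt_cosh.2 hx.ne') (one_lt_cosh.2 hy.ne')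
    (cosh_le_cosh.2 (abs_le_abs_of_nonneg hx.le hxy))

theorem stmt_12 :
    (∀ a : ℝ, Real.log 2 / 2 ≤ a → 0 < Afun a ∧ Afun a < Rfun a) ∧
    AntitoneOn (fun a => Afun a / Rfun a) (Set.Ici (Real.log 2 / 2)) ∧
    (∀ a : ℝ, Real.log 2 / 2 ≤ a →
      Rfun a ∈ Set.Ioc (0 : ℝ) (Real.log (17 + 12 * Real.sqrt 2))) := by
  have hpos : (0 : ℝ) < log 2 / 2 := by positivity
  have hne : ∀ a, log 2 / 2 ≤ a → a ≠ 0 := fun a ha => (hpos.trans_le ha).ne'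
  refine ⟨fun a ha => ⟨Afun_pos (hne a ha), Afun_lt_Rfun (hne a ha)⟩,
    antitoneOn_Afun_div_Rfun.mono (Ici_subset_Ioi.2 hpos),
    fun a ha => ⟨Rfun_pos (hne a ha), ?_⟩⟩
  rw [← Rfun_half_log_two]
  exact antitoneOn_Rfun hpos (hpos.trans_le ha) ha
end

section
/- Let λ > 0 and c > 0 be real numbers. For any y > 0, 0 ≤ (1/2πi)∫_{c−i∞}^{c+i∞} y^s · (e^{λs}−1)/(λs) · ds/s − 1_{[1,∞)}(y) ≤ (1/2πi)∫_{c−i∞}^{c+i∞} y^s · (e^{λs}−1)/(λs) · (1−e^{−λs})/s · ds, where 1_{[1,∞)}(y) is 1 if y ≥ 1 and 0 otherwise. -/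
/-!
Let `g_λ(x) = min 1 (max 0 ((x + λ) / λ))` be the piecewise linear step
rising from `0` at `x = -λ` to `1` at `x = 0`. Its Laplace transform is
`∫ g_λ(u) e^{-su} du = (e^{λs} - 1) / (λ s²)`, so Mellin inversion on the line `Re s = c` turns the
first integral into `g_λ(log y)` and the second into `g_λ(log y) - g_λ(log y - λ)`.
With `x = log y` the inequalities then say `1_{x ≥ 0} ≤ g_λ(x)` and `g_λ(x - λ) ≤ 1_{x ≥ 0}`.
-/

open MeasureTheory Set Filter Complex
open scoped Real

noncomputable def smoothStep (lam x : ℝ) : ℝ := min 1 (max 0 ((x + lam) / lam))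

section smoothStep

variable {lam x : ℝ}

lemma smoothStep_nonneg (lam x : ℝ) : 0 ≤ smoothStep lam x :=
  le_min zero_le_one (le_max_left _ _)

lemma smoothStep_le_one (lam x : ℝ) : smoothStep lam x ≤ 1 :=
  min_le_left _ _

lemma smoothStep_of_nonneg (hlam : 0 < lam) (hx : 0 ≤ x) : smoothStep lam x = 1 := by
  have : 1 ≤ (x + lam) / lam := (le_div_iff₀ hlam).2 (by linarith)
  rw [smoothStep, max_eq_right (zero_le_one.trans this), min_eq_left this]

lemma smoothStep_of_le (hlam : 0 < lam) (hx : x ≤ -lam) : smoothStep lam x = 0 := by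
  rw [smoothStep, max_eq_left (div_nonpos_of_nonpos_of_nonneg (by linarith) hlam.le),
    min_eq_right zero_le_one]

lemma smoothStep_of_mem_Icc (hlam : 0 < lam) (hx : x ∈ Icc (-lam) 0) :
    smoothStep lam x = (x + lam) / lam := by
  rw [smoothStep, max_eq_right (div_nonneg (by linarith [hx.1]) hlam.le),
    min_eq_right ((div_le_one hlam).2 (by linarith [hx.2]))]

lemma continuous_smoothStep (lam : ℝ) : Continuous (smoothStep lam) := by
  unfold smoothStep; fun_prop

lemma indicator_le_smoothStep (hlam : 0 < lam) (x : ℝ) :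
    (if 0 ≤ x then 1 else 0) ≤ smoothStep lam x := by
  split_ifs with hx
  · exact (smoothStep_of_nonneg hlam hx).ge
  · exact smoothStep_nonneg lam x

lemma smoothStep_sub_le_indicator (hlam : 0 < lam) (x : ℝ) :
    smoothStep lam (x - lam) ≤ if 0 ≤ x then 1 else 0 := by
  split_ifs with hx
  · exact smoothStep_le_one lam _
  · exact (smoothStep_of_le hlam (by linarith)).le

end smoothStep

lemma integral_ofReal_mul_cexp_neg_mul {s : ℂ} (hs : s ≠ 0) (a b : ℝ) :
    ∫ u in a..b, (u : ℂ) * cexp (-(s * u)) =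
      (a / s + 1 / s ^ 2) * cexp (-(s * a)) - (b / s + 1 / s ^ 2) * cexp (-(s * b)) := by
  have hderiv (u : ℝ) : HasDerivAt (fun u : ℝ ↦ -((u / s + 1 / s ^ 2) * cexp (-(s * u))))
      ((u : ℂ) * cexp (-(s * u))) u := by
    have hlin : HasDerivAt (fun u : ℝ ↦ (u : ℂ) / s + 1 / s ^ 2) (1 / s) u := by
      simpa using (hasDerivAt_id (u : ℂ)).comp_ofReal.div_const s |>.add_const (1 / s ^ 2)
    have hexp : HasDerivAt (fun u : ℝ ↦ cexp (-(s * u))) (cexp (-(s * u)) * -s) u := by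
      simpa using ((hasDerivAt_id (u : ℂ)).const_mul s).neg.cexp.comp_ofReal
    refine (hlin.fun_mul hexp).fun_neg.congr_deriv ?_
    field_simp
    ring
  rw [intervalIntegral.integral_eq_sub_of_hasDerivAt (fun u _ ↦ hderiv u) (by
    apply Continuous.intervalIntegrable; fun_prop)]
  ring

lemma integrable_smoothStep_mul_cexp {lam : ℝ} (hlam : 0 < lam) {s : ℂ} (hs : 0 < s.re) :
    Integrable (fun u : ℝ ↦ (smoothStep lam u : ℂ) * cexp (-(s * u))) := by
  have hIoi : IntegrableOn (fun u : ℝ ↦ (smoothStep lam u : ℂ) * cexp (-(s * u))) (Ioi (-lam)) := by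
    have := integrableOn_exp_mul_complex_Ioi (a := -s) (by simpa using hs) (-lam)
    simp_rw [neg_mul] at this
    refine this.bdd_mul (c := 1)
      (continuous_ofReal.comp (continuous_smoothStep lam)).aestronglyMeasurable
      (Eventually.of_forall fun u ↦ ?_)
    simpa [abs_of_nonneg (smoothStep_nonneg lam u)] using smoothStep_le_one lam u
  refine hIoi.integrable_of_forall_notMem_eq_zero fun u hu ↦ ?_
  rw [smoothStep_of_le hlam (not_lt.1 hu)]
  simp

noncomputable def smoothedPerronKernel (lam : ℝ) (s : ℂ) : ℂ :=
  (cexp (lam * s) - 1) / (lam * s) / s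

lemma integral_smoothStep_mul_cexp {lam : ℝ} (hlam : 0 < lam) {s : ℂ} (hs : 0 < s.re) :
    ∫ u : ℝ, (smoothStep lam u : ℂ) * cexp (-(s * u)) = smoothedPerronKernel lam s := by
  have hs0 : s ≠ 0 := fun h ↦ by simp [h] at hs
  have hlam0 : (lam : ℂ) ≠ 0 := ofReal_ne_zero.2 hlam.ne'
  have hint := integrable_smoothStep_mul_cexp hlam hs
  have hsupp : ∫ u : ℝ, (smoothStep lam u : ℂ) * cexp (-(s * u))
      = ∫ u in Ioi (-lam), (smoothStep lam u : ℂ) * cexp (-(s * u)) :=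
    (setIntegral_eq_integral_of_forall_compl_eq_zero fun u hu ↦ by
      rw [smoothStep_of_le hlam (not_lt.1 hu)]; simp).symm
  have hramp : ∫ u in Ioc (-lam) 0, (smoothStep lam u : ℂ) * cexp (-(s * u))
      = ∫ u in (-lam)..0, ((lam : ℂ)⁻¹ * ((u : ℂ) * cexp (-(s * u))) + cexp (-s * u)) := by
    rw [← intervalIntegral.integral_of_le (by linarith)]
    refine intervalIntegral.integral_congr fun u hu ↦ ?_
    rw [uIcc_of_le (by linarith)] at hu
    simp only [smoothStep_of_mem_Icc hlam hu]
    push_cast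
    field_simp
  have hflat : ∫ u in Ioi 0, (smoothStep lam u : ℂ) * cexp (-(s * u)) = 1 / s := by
    rw [setIntegral_congr_fun measurableSet_Ioi fun u hu ↦ by
      rw [smoothStep_of_nonneg hlam (le_of_lt hu), ofReal_one, one_mul, ← neg_mul]]
    simpa [neg_div_neg_eq] using integral_exp_mul_complex_Ioi (a := -s) (by simpa using hs) 0
  rw [hsupp, ← Ioc_union_Ioi_eq_Ioi (by linarith : -lam ≤ 0),
    setIntegral_union Ioc_disjoint_Ioi_same measurableSet_Ioi hint.integrableOn hint.integrableOn,
    hramp, intervalIntegral.integral_add (by apply Continuous.intervalIntegrable; fun_prop)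
      (by apply Continuous.intervalIntegrable; fun_prop), intervalIntegral.integral_const_mul,
    hflat, integral_ofReal_mul_cexp_neg_mul hs0, integral_exp_mul_complex (neg_ne_zero.2 hs0)]
  simp only [smoothedPerronKernel, ofReal_zero, mul_zero, neg_zero, Complex.exp_zero, ofReal_neg,
    mul_neg, neg_mul, neg_neg]
  field_simp
  ring

lemma mellin_smoothStep_neg_log {lam : ℝ} (hlam : 0 < lam) {s : ℂ} (hs : 0 < s.re) :
    mellin (fun t ↦ (smoothStep lam (-Real.log t) : ℂ)) s = smoothedPerronKernel lam s := by
  rw [mellin_eq_fourier, Real.fourier_real_eq_integral_exp_smul,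
    ← integral_smoothStep_mul_cexp hlam hs]
  congr 1 with u
  rw [Real.log_exp, neg_neg, real_smul, smul_eq_mul, ofReal_exp, ← mul_assoc, ← exp_add,
    mul_comm]
  congr 2
  conv_rhs => rw [← re_add_im s]
  push_cast
  field_simp
  ring

lemma mellinConvergent_smoothStep_neg_log {lam σ : ℝ} (hlam : 0 < lam) (hσ : 0 < σ) :
    MellinConvergent (fun t ↦ (smoothStep lam (-Real.log t) : ℂ)) σ := by
  refine mellinConvergent_of_isBigO_rpow (a := σ + 1) (b := 0) ?_ ?_ (by simp) ?_
    (by simpa using hσ)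
  · refine ContinuousOn.locallyIntegrableOn ?_ measurableSet_Ioi
    exact (continuous_ofReal.comp (continuous_smoothStep lam)).comp_continuousOn
      (Real.continuousOn_log.mono fun t ht ↦ ne_of_gt ht).neg
  · refine EventuallyEq.trans_isBigO ?_ (Asymptotics.isBigO_zero _ _)
    filter_upwards [eventually_ge_atTop (Real.exp lam)] with t ht
    rw [smoothStep_of_le hlam
      (by linarith [(Real.le_log_iff_exp_le ((Real.exp_pos lam).trans_le ht)).2 ht]), ofReal_zero]
  · refine Asymptotics.IsBigO.of_bound 1 (Eventually.of_forall fun t ↦ ?_)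
    simpa [abs_of_nonneg (smoothStep_nonneg _ _)] using smoothStep_le_one lam (-Real.log t)

lemma integrable_inv_sq_add_sq {c : ℝ} (hc : c ≠ 0) : Integrable fun t : ℝ ↦ (c ^ 2 + t ^ 2)⁻¹ := by
  refine ((integrable_inv_one_add_sq.comp_div hc).const_mul (c ^ 2)⁻¹).congr
    (Eventually.of_forall fun t ↦ ?_)
  simp only
  field_simp

lemma verticalIntegrable_smoothedPerronKernel (lam : ℝ) {c : ℝ} (hc : c ≠ 0) :
    VerticalIntegrable (smoothedPerronKernel lam) c := by
  refine ((integrable_inv_sq_add_sq hc).const_mul ((Real.exp (lam * c) + 1) / |lam|)).mono'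
    (Measurable.aestronglyMeasurable (by unfold smoothedPerronKernel; fun_prop))
    (Eventually.of_forall fun t ↦ ?_)
  have hnum : ‖cexp (lam * (c + t * I)) - 1‖ ≤ Real.exp (lam * c) + 1 := by
    refine (norm_sub_le _ _).trans ?_
    simp [Complex.norm_exp]
  have hden : ‖(c : ℂ) + t * I‖ ^ 2 = c ^ 2 + t ^ 2 := by
    rw [Complex.sq_norm, normSq_add_mul_I]
  calc _ = ‖cexp (lam * (c + t * I)) - 1‖ / |lam| * (‖(c : ℂ) + t * I‖ ^ 2)⁻¹ := by
        rw [smoothedPerronKernel, norm_div, norm_div, norm_mul, norm_real, Real.norm_eq_abs]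
        ring
    _ ≤ _ := by
        rw [hden]
        gcongr

lemma verticalIntegrable_cpow_mul_smoothedPerronKernel (lam : ℝ) {c y : ℝ} (hc : c ≠ 0)
    (hy : 0 < y) : VerticalIntegrable (fun s ↦ (y : ℂ) ^ s * smoothedPerronKernel lam s) c := by
  refine (verticalIntegrable_smoothedPerronKernel lam hc).bdd_mul (c := y ^ c)
    (Measurable.aestronglyMeasurable (by fun_prop)) (Eventually.of_forall fun t ↦ ?_)
  simp [norm_cpow_eq_rpow_re_of_pos hy]

lemma cpow_neg_ofReal_inv {y : ℝ} (hy : 0 ≤ y) (s : ℂ) : ((y⁻¹ : ℝ) : ℂ) ^ (-s) = (y : ℂ) ^ s := by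
  rw [ofReal_inv, inv_cpow _ _ (by simp [arg_ofReal_of_nonneg hy, Real.pi_ne_zero.symm]),
    cpow_neg, inv_inv]

theorem smoothed_perron {lam c y : ℝ} (hlam : 0 < lam) (hc : 0 < c) (hy : 0 < y) :
    (2 * π)⁻¹ • ∫ t : ℝ, (y : ℂ) ^ ((c : ℂ) + t * I) * smoothedPerronKernel lam (c + t * I) =
      (smoothStep lam (Real.log y) : ℂ) := by
  have hmellin (t : ℝ) := mellin_smoothStep_neg_log hlam (s := c + t * I) (by simpa using hc)
  have hinv := mellinInv_mellin_eq c _ (inv_pos.2 hy) (mellinConvergent_smoothStep_neg_log hlam hc)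
    (by simpa only [VerticalIntegrable, hmellin]
      using verticalIntegrable_smoothedPerronKernel lam hc.ne')
    ((continuous_ofReal.comp (continuous_smoothStep lam)).continuousAt.comp
      (Real.continuousAt_log (inv_pos.2 hy).ne').neg)
  rw [Real.log_inv, neg_neg] at hinv
  rw [← hinv, mellinInv, one_div]
  simp only [hmellin, cpow_neg_ofReal_inv hy.le, smul_eq_mul]

lemma ofReal_cpow_mul_exp_neg {y : ℝ} (hy : 0 ≤ y) (lam : ℝ) (s : ℂ) :
    ((y * Real.exp (-lam) : ℝ) : ℂ) ^ s = (y : ℂ) ^ s * cexp (-(lam * s)) := by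
  rw [ofReal_mul, mul_cpow_ofReal_nonneg hy (Real.exp_pos _).le,
    cpow_def_of_ne_zero (ofReal_ne_zero.2 (Real.exp_pos _).ne'), ← ofReal_log (Real.exp_pos _).le,
    Real.log_exp, ofReal_neg, neg_mul]

lemma cpow_mul_smoothing_div (y lam : ℝ) (s : ℂ) :
    (y : ℂ) ^ s * (cexp (lam * s) - 1) / (lam * s) / s =
      (y : ℂ) ^ s * smoothedPerronKernel lam s := by
  simp only [smoothedPerronKernel, mul_div_assoc]

lemma cpow_mul_smoothing_mul_one_sub_div {y : ℝ} (hy : 0 ≤ y) (lam : ℝ) (s : ℂ) :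
    (y : ℂ) ^ s * (cexp (lam * s) - 1) / (lam * s) * (1 - cexp (-(lam * s))) / s =
      (y : ℂ) ^ s * smoothedPerronKernel lam s -
        ((y * Real.exp (-lam) : ℝ) : ℂ) ^ s * smoothedPerronKernel lam s := by
  rw [ofReal_cpow_mul_exp_neg hy, smoothedPerronKernel]
  ring

open Complex in
theorem stmt_13 (lam c : ℝ) (hlam : 0 < lam) (hc : 0 < c) (y : ℝ) (hy : 0 < y) :
    0 ≤ ((2 * Real.pi)⁻¹ • ∫ t : ℝ, (y : ℂ) ^ ((c : ℂ) + t * Complex.I)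
          * (Complex.exp ((lam : ℂ) * ((c : ℂ) + t * Complex.I)) - 1)
          / ((lam : ℂ) * ((c : ℂ) + t * Complex.I)) / ((c : ℂ) + t * Complex.I) : ℂ).re
        - (if 1 ≤ y then (1 : ℝ) else 0) ∧
    ((2 * Real.pi)⁻¹ • ∫ t : ℝ, (y : ℂ) ^ ((c : ℂ) + t * Complex.I)
          * (Complex.exp ((lam : ℂ) * ((c : ℂ) + t * Complex.I)) - 1)
          / ((lam : ℂ) * ((c : ℂ) + t * Complex.I)) / ((c : ℂ) + t * Complex.I) : ℂ).re
        - (if 1 ≤ y then (1 : ℝ) else 0)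
      ≤ ((2 * Real.pi)⁻¹ • ∫ t : ℝ, (y : ℂ) ^ ((c : ℂ) + t * Complex.I)
          * (Complex.exp ((lam : ℂ) * ((c : ℂ) + t * Complex.I)) - 1)
          / ((lam : ℂ) * ((c : ℂ) + t * Complex.I))
          * (1 - Complex.exp (-((lam : ℂ) * ((c : ℂ) + t * Complex.I))))
          / ((c : ℂ) + t * Complex.I) : ℂ).re := by
  have hy' : 0 < y * Real.exp (-lam) := by positivity
  simp only [cpow_mul_smoothing_mul_one_sub_div hy.le, cpow_mul_smoothing_div]
  rw [integral_sub (verticalIntegrable_cpow_mul_smoothedPerronKernel lam hc.ne' hy)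
      (verticalIntegrable_cpow_mul_smoothedPerronKernel lam hc.ne' hy'),
    smul_sub, smoothed_perron hlam hc hy, smoothed_perron hlam hc hy',
    Real.log_mul hy.ne' (Real.exp_pos _).ne', Real.log_exp, ← sub_eq_add_neg, ← ofReal_sub,
    ofReal_re, ofReal_re]
  simp only [← Real.log_nonneg_iff hy]
  constructor
  · linarith [indicator_le_smoothStep hlam (Real.log y)]
  · linarith [smoothStep_sub_le_indicator hlam (Real.log y)]
end

section
/- Let X = (X(p))_p be independent random variables, each uniformly distributed on the unit circle, indexed by primes. For 1/2 < σ ≤ 1 and κ > 0, define E_p(κ) = E(|1 − X(p)p^{−σ}|^{−κ}) = (1/2π)∫_0^{2π}(1 − 2cos θ·p^{−σ} + p^{−2σ})^{−κ/2} dθ. Then for any fixed prime p and as κ → ∞, log E_p(κ) = −κ·log(1 − p^{−σ}) + O(log κ). -/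
/-!
Writing `r = p^{-σ} ∈ [0, 1)` and `d(θ) = |1 - r e^{iθ}|² = 1 - 2r cos θ + r²`, one has
`(1 - r)² ≤ d(θ) ≤ (1 - r)² + r θ²`. The left inequality bounds the mean of `d^{-κ/2}` above by
`(1 - r)^{-κ}`. On the window `0 ≤ θ ≤ κ^{-1/2}` the right one gives
`d(θ) ≤ (1 - r)² (1 + A/κ)` with `A = r/(1 - r)²`, so there `d^{-κ/2} ≥ e^{-A/2} (1 - r)^{-κ}`,
and the mean is at least a constant times `κ^{-1/2} (1 - r)^{-κ}`. Taking logarithms, the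
error is `O(log κ)`.
-/

open Real intervalIntegral MeasureTheory

/-- `|1 - r e^{iθ}|²`. -/
noncomputable def sqDistOne (r θ : ℝ) : ℝ := 1 - 2 * cos θ * r + r * r

/-- `𝔼 |1 - X r|^{-κ}` for `X` uniform on the unit circle; the paper's `E_p(κ)` at `r = p^{-σ}`. -/
noncomputable def circleMoment (r κ : ℝ) : ℝ :=
  (2 * π)⁻¹ * ∫ θ in (0 : ℝ)..2 * π, sqDistOne r θ ^ (-κ / 2)

section

variable {r : ℝ}

lemma sq_one_sub_le_sqDistOne (hr : 0 ≤ r) (θ : ℝ) : (1 - r) ^ 2 ≤ sqDistOne r θ := by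
  have := cos_le_one θ
  unfold sqDistOne
  nlinarith

lemma sqDistOne_pos (hr₀ : 0 ≤ r) (hr₁ : r < 1) (θ : ℝ) : 0 < sqDistOne r θ :=
  (pow_pos (sub_pos.2 hr₁) 2).trans_le (sq_one_sub_le_sqDistOne hr₀ θ)

lemma sqDistOne_le (hr : 0 ≤ r) (θ : ℝ) : sqDistOne r θ ≤ (1 - r) ^ 2 + r * θ ^ 2 := by
  have : 1 - θ ^ 2 / 2 ≤ cos θ := one_sub_sq_div_two_le_cos
  unfold sqDistOne
  nlinarith

lemma continuous_sqDistOne_rpow (hr₀ : 0 ≤ r) (hr₁ : r < 1) (s : ℝ) :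
    Continuous fun θ => sqDistOne r θ ^ s := by
  refine Continuous.rpow_const (by unfold sqDistOne; fun_prop) fun θ => ?_
  exact Or.inl (sqDistOne_pos hr₀ hr₁ θ).ne'

lemma sq_rpow_neg_half {x : ℝ} (hx : 0 ≤ x) (κ : ℝ) : (x ^ 2) ^ (-κ / 2) = x ^ (-κ) := by
  rw [← rpow_natCast, ← rpow_mul hx]
  congr 1
  ring

lemma sqDistOne_rpow_le (hr₀ : 0 ≤ r) (hr₁ : r < 1) {κ : ℝ} (hκ : 0 ≤ κ) (θ : ℝ) :
    sqDistOne r θ ^ (-κ / 2) ≤ (1 - r) ^ (-κ) := by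
  rw [← sq_rpow_neg_half (sub_pos.2 hr₁).le]
  exact rpow_le_rpow_of_nonpos (pow_pos (sub_pos.2 hr₁) 2) (sq_one_sub_le_sqDistOne hr₀ θ)
    (by linarith)

lemma exp_neg_mul_le_one_add_rpow_neg {s t : ℝ} (hs : 0 ≤ s) (ht : 0 ≤ t) :
    exp (-(s * t)) ≤ (1 + t) ^ (-s) := by
  calc exp (-(s * t)) = exp t ^ (-s) := by rw [← exp_mul]; ring_nf
    _ ≤ (1 + t) ^ (-s) :=
      rpow_le_rpow_of_nonpos (by positivity) (by linarith [add_one_le_exp t]) (by linarith)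

lemma exp_mul_rpow_le_sqDistOne_rpow (hr₀ : 0 ≤ r) (hr₁ : r < 1) {κ θ : ℝ} (hκ : 0 < κ)
    (hθ : θ ^ 2 ≤ κ⁻¹) :
    exp (-(r / (1 - r) ^ 2 / 2)) * (1 - r) ^ (-κ) ≤ sqDistOne r θ ^ (-κ / 2) := by
  set A := r / (1 - r) ^ 2
  have h1r : 0 < (1 - r) ^ 2 := pow_pos (sub_pos.2 hr₁) 2
  have hA : 0 ≤ A / κ := by positivity
  have hwindow : sqDistOne r θ ≤ (1 - r) ^ 2 * (1 + A / κ) := by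
    have : r * θ ^ 2 ≤ r * κ⁻¹ := mul_le_mul_of_nonneg_left hθ hr₀
    calc sqDistOne r θ ≤ (1 - r) ^ 2 + r * κ⁻¹ := by linarith [sqDistOne_le hr₀ θ]
      _ = (1 - r) ^ 2 * (1 + A / κ) := by
        simp only [A]
        field_simp [(sub_pos.2 hr₁).ne']
  calc exp (-(A / 2)) * (1 - r) ^ (-κ)
      = (1 - r) ^ (-κ) * exp (-(κ / 2 * (A / κ))) := by
        rw [mul_comm]
        congr 3
        field_simp
    _ ≤ ((1 - r) ^ 2) ^ (-κ / 2) * (1 + A / κ) ^ (-κ / 2) := by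
        rw [sq_rpow_neg_half (sub_pos.2 hr₁).le, neg_div]
        gcongr
        exact exp_neg_mul_le_one_add_rpow_neg (by linarith) hA
    _ = ((1 - r) ^ 2 * (1 + A / κ)) ^ (-κ / 2) := (mul_rpow h1r.le (by linarith)).symm
    _ ≤ sqDistOne r θ ^ (-κ / 2) :=
        rpow_le_rpow_of_nonpos (sqDistOne_pos hr₀ hr₁ θ) hwindow (by linarith)

lemma circleMoment_le (hr₀ : 0 ≤ r) (hr₁ : r < 1) {κ : ℝ} (hκ : 0 ≤ κ) :
    circleMoment r κ ≤ (1 - r) ^ (-κ) := by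
  have h2π : 0 < 2 * π := by positivity
  have hint : ∫ θ in (0 : ℝ)..2 * π, sqDistOne r θ ^ (-κ / 2) ≤ 2 * π * (1 - r) ^ (-κ) := by
    calc _ ≤ ∫ _ in (0 : ℝ)..2 * π, (1 - r) ^ (-κ) :=
          integral_mono_on h2π.le ((continuous_sqDistOne_rpow hr₀ hr₁ _).intervalIntegrable _ _)
            intervalIntegrable_const fun θ _ => sqDistOne_rpow_le hr₀ hr₁ hκ θ
      _ = 2 * π * (1 - r) ^ (-κ) := by simp
  unfold circleMoment
  rw [inv_mul_le_iff₀ h2π]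
  exact hint

lemma le_circleMoment (hr₀ : 0 ≤ r) (hr₁ : r < 1) {κ : ℝ} (hκ : 1 ≤ κ) :
    (2 * π)⁻¹ * exp (-(r / (1 - r) ^ 2 / 2)) * (√κ)⁻¹ * (1 - r) ^ (-κ) ≤ circleMoment r κ := by
  set m := exp (-(r / (1 - r) ^ 2 / 2)) * (1 - r) ^ (-κ)
  set δ := (√κ)⁻¹
  have hκ₀ : 0 < κ := by linarith
  have hδ₀ : 0 ≤ δ := by positivity
  have hδ₁ : δ ≤ 2 * π := by
    have : δ ≤ 1 := inv_le_one_of_one_le₀ (one_le_sqrt.2 hκ)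
    linarith [pi_gt_three]
  have hcont := continuous_sqDistOne_rpow hr₀ hr₁ (-κ / 2)
  have hwindow : δ * m ≤ ∫ θ in (0 : ℝ)..δ, sqDistOne r θ ^ (-κ / 2) := by
    calc δ * m = ∫ _ in (0 : ℝ)..δ, m := by simp
      _ ≤ _ := integral_mono_on hδ₀ intervalIntegrable_const (hcont.intervalIntegrable _ _)
          fun θ hθ => exp_mul_rpow_le_sqDistOne_rpow hr₀ hr₁ hκ₀ <| by
            calc θ ^ 2 ≤ δ ^ 2 := pow_le_pow_left₀ hθ.1 hθ.2 2
              _ = κ⁻¹ := by rw [inv_pow, sq_sqrt hκ₀.le]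
  have htail : ∫ θ in (0 : ℝ)..δ, sqDistOne r θ ^ (-κ / 2)
      ≤ ∫ θ in (0 : ℝ)..2 * π, sqDistOne r θ ^ (-κ / 2) :=
    integral_mono_interval le_rfl hδ₀ hδ₁
      (ae_of_all _ fun θ => (rpow_pos_of_pos (sqDistOne_pos hr₀ hr₁ θ) _).le)
      (hcont.intervalIntegrable _ _)
  calc (2 * π)⁻¹ * exp (-(r / (1 - r) ^ 2 / 2)) * δ * (1 - r) ^ (-κ) = (2 * π)⁻¹ * (δ * m) := by
        ring
    _ ≤ circleMoment r κ := by
        unfold circleMoment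
        gcongr
        exact hwindow.trans htail

end

lemma abs_log_le_mul_log_of_inv_sqrt_le {x c κ : ℝ} (hc₀ : 0 < c) (hc₁ : c ≤ 1)
    (hκ : exp 1 ≤ κ) (hlow : c * (√κ)⁻¹ ≤ x) (hup : x ≤ 1) :
    |log x| ≤ (1 - log c) * log κ := by
  have hκ₀ : 0 < κ := (exp_pos 1).trans_le hκ
  have hlogκ : 1 ≤ log κ := by simpa using log_le_log (exp_pos 1) hκ
  have hlogc : log c ≤ 0 := log_nonpos hc₀.le hc₁
  have hx₀ : 0 < x := lt_of_lt_of_le (by positivity) hlow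
  have hlog_low : log c - log κ / 2 ≤ log x := by
    have := log_le_log (by positivity) hlow
    rwa [log_mul hc₀.ne' (by positivity), log_inv, log_sqrt hκ₀.le, ← sub_eq_add_neg] at this
  have hlog_up : log x ≤ 0 := log_nonpos hx₀.le hup
  rw [abs_le]
  constructor <;> nlinarith

lemma abs_log_circleMoment_add_le {r : ℝ} (hr₀ : 0 ≤ r) (hr₁ : r < 1) :
    ∃ C κ₀ : ℝ, 0 < C ∧ ∀ κ : ℝ, κ₀ ≤ κ →
      |log (circleMoment r κ) + κ * log (1 - r)| ≤ C * log κ := by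
  set c := (2 * π)⁻¹ * exp (-(r / (1 - r) ^ 2 / 2))
  have hc₀ : 0 < c := by positivity
  have hc₁ : c ≤ 1 := by
    have : (2 * π)⁻¹ ≤ 1 := inv_le_one_of_one_le₀ (by linarith [pi_gt_three])
    have : exp (-(r / (1 - r) ^ 2 / 2)) ≤ 1 :=
      exp_le_one_iff.2 (neg_nonpos.2 (by positivity))
    nlinarith [exp_pos (-(r / (1 - r) ^ 2 / 2))]
  refine ⟨1 - log c, exp 1, by linarith [log_nonpos hc₀.le hc₁], fun κ hκ => ?_⟩
  have hκ₁ : 1 ≤ κ := le_trans (one_le_exp zero_le_one) hκ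
  have hM : 0 < (1 - r) ^ (-κ) := rpow_pos_of_pos (sub_pos.2 hr₁) _
  have hratio : log (circleMoment r κ) + κ * log (1 - r)
      = log (circleMoment r κ / (1 - r) ^ (-κ)) := by
    have hE : 0 < circleMoment r κ :=
      lt_of_lt_of_le (by positivity) (le_circleMoment hr₀ hr₁ hκ₁)
    rw [log_div hE.ne' hM.ne', log_rpow (sub_pos.2 hr₁)]
    ring
  rw [hratio]
  refine abs_log_le_mul_log_of_inv_sqrt_le hc₀ hc₁ hκ ?_ ?_
  · rw [le_div_iff₀ hM]
    exact le_circleMoment hr₀ hr₁ hκ₁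
  · rw [div_le_one hM]
    exact circleMoment_le hr₀ hr₁ (by linarith)

theorem stmt_14_general (σ : ℝ) (hσ : 1 / 2 < σ) (p : ℕ) (hp : p.Prime) :
    ∃ C κ₀ : ℝ, 0 < C ∧ ∀ κ : ℝ, κ₀ ≤ κ →
      |Real.log ((2 * Real.pi)⁻¹ * ∫ θ in (0 : ℝ)..(2 * Real.pi),
            (1 - 2 * Real.cos θ * (p : ℝ) ^ (-σ) + (p : ℝ) ^ (-(2 * σ))) ^ (-κ / 2))
          + κ * Real.log (1 - (p : ℝ) ^ (-σ))|
        ≤ C * Real.log κ := by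
  have hp₁ : (1 : ℝ) < p := by exact_mod_cast hp.one_lt
  have hsq : (p : ℝ) ^ (-(2 * σ)) = (p : ℝ) ^ (-σ) * (p : ℝ) ^ (-σ) := by
    rw [← rpow_add (by linarith)]
    ring_nf
  rw [hsq]
  exact abs_log_circleMoment_add_le (rpow_nonneg (by linarith) _)
    (rpow_lt_one_of_one_lt_of_neg hp₁ (by linarith))

theorem stmt_14 (σ : ℝ) (hσ : 1 / 2 < σ) (hσ' : σ ≤ 1) (p : ℕ) (hp : p.Prime) :
    ∃ C κ₀ : ℝ, 0 < C ∧ ∀ κ : ℝ, κ₀ ≤ κ →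
      |Real.log ((2 * Real.pi)⁻¹ * ∫ θ in (0 : ℝ)..(2 * Real.pi),
            (1 - 2 * Real.cos θ * (p : ℝ) ^ (-σ) + (p : ℝ) ^ (-(2 * σ))) ^ (-κ / 2))
          + κ * Real.log (1 - (p : ℝ) ^ (-σ))|
        ≤ C * Real.log κ :=
  stmt_14_general σ hσ p hp
end
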